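/- arXiv:2604.24303 — 4 statements merged into one kernel-verified Lean document; each statement's English description precedes it below -/
import Mathlib

section
/- Let U₁ ∈ ℂ^{L×K} (K ≤ L) have orthonormal columns (U₁ᴴU₁ = I_K), and let U₂ ∈ ℂ^{L×(L−K)} be such that [U₁, U₂] is unitary. Then the block matrix Φ = [[0_{K×K}, U₁ᵀ], [U₁, −U₂U₂ᵀ]] ∈ ℂ^{(K+L)×(K+L)} is unitary (ΦᴴΦ = I) and symmetric (Φ = Φᵀ). -/
open Matrix

theorem two_layer_milac_phi_unitary_symmetric
    (K L : ℕ) (hKL : K ≤ L)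
    (U1 : Matrix (Fin L) (Fin K) ℂ) (U2 : Matrix (Fin L) (Fin (L - K)) ℂ)
    (h1 : U1ᴴ * U1 = 1) (h2 : U2ᴴ * U2 = 1) (h12 : U1ᴴ * U2 = 0)
    (hfull : U1 * U1ᴴ + U2 * U2ᴴ = 1) :
    (Matrix.fromBlocks (0 : Matrix (Fin K) (Fin K) ℂ) U1ᵀ U1 (-(U2 * U2ᵀ)))ᴴ *
        Matrix.fromBlocks 0 U1ᵀ U1 (-(U2 * U2ᵀ)) = 1 ∧
      Matrix.fromBlocks (0 : Matrix (Fin K) (Fin K) ℂ) U1ᵀ U1 (-(U2 * U2ᵀ)) =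
        (Matrix.fromBlocks (0 : Matrix (Fin K) (Fin K) ℂ) U1ᵀ U1 (-(U2 * U2ᵀ)))ᵀ := by
  have h21 : U2ᴴ * U1 = 0 := by
    have := congrArg Matrix.conjTranspose h12
    simpa [Matrix.conjTranspose_mul] using this
  constructor
  · rw [Matrix.fromBlocks_conjTranspose, Matrix.fromBlocks_multiply]
    have hTL : (0 : Matrix (Fin K) (Fin K) ℂ)ᴴ * 0 + U1ᴴ * U1 = 1 := by simp [h1]
    have hTR : (0 : Matrix (Fin K) (Fin K) ℂ)ᴴ * U1ᵀ + U1ᴴ * -(U2 * U2ᵀ) = 0 := by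
      simp [← Matrix.mul_assoc, h12]
    have hBL : (U1ᵀ)ᴴ * (0 : Matrix (Fin K) (Fin K) ℂ) + (-(U2 * U2ᵀ))ᴴ * U1 = 0 := by
      simp [Matrix.conjTranspose_mul, Matrix.mul_assoc, h21]
    have hBR : (U1ᵀ)ᴴ * U1ᵀ + (-(U2 * U2ᵀ))ᴴ * -(U2 * U2ᵀ) = 1 := by
      have e1 : (U1ᵀ)ᴴ * U1ᵀ = (U1 * U1ᴴ)ᵀ := by
        rw [Matrix.transpose_mul]; rfl
      have e2 : (-(U2 * U2ᵀ))ᴴ * -(U2 * U2ᵀ) = (U2 * U2ᴴ)ᵀ := by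
        have : (U2ᵀ)ᴴ * (U2ᴴ * U2) * U2ᵀ = (U2ᵀ)ᴴ * U2ᵀ := by rw [h2]; simp
        calc (-(U2 * U2ᵀ))ᴴ * -(U2 * U2ᵀ)
            = (U2ᵀ)ᴴ * (U2ᴴ * U2) * U2ᵀ := by
              simp [Matrix.conjTranspose_mul, Matrix.mul_assoc]
          _ = (U2ᵀ)ᴴ * U2ᵀ := this
          _ = (U2 * U2ᴴ)ᵀ := by rw [Matrix.transpose_mul]; rfl
      rw [e1, e2, ← Matrix.transpose_add, hfull, Matrix.transpose_one]
    rw [hTL, hTR, hBL, hBR, ← Matrix.fromBlocks_one]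
  · rw [Matrix.fromBlocks_transpose]
    simp
end

section
/- For any matrix P_d ∈ ℂ^{L×K} with K ≤ L, there exist matrices Θ ∈ ℂ^{2K×2K} and Φ ∈ ℂ^{(K+L)×(K+L)} that are both unitary and symmetric (Θ = Θᵀ, Φ = Φᵀ), and a diagonal matrix D ∈ ℝ^{K×K} with nonnegative entries, such that P_d = Φ₂₁ · D · Θ₂₁, where Θ₂₁ = Θ[K+1:2K, 1:K] and Φ₂₁ = Φ[K+1:K+L, 1:K] are the lower-left blocks. -/
open Matrix

/-!
Write `Pd = A * D * B` with `D ≥ 0` diagonal, `B` unitary and `A` the first `K` columns of a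
unitary `[A C]`: if `V` diagonalises `Pdᴴ * Pd`, the columns of `Pd * V` are orthogonal, and since
`K ≤ L` their normalisations extend to an orthonormal basis of `ℂᴸ`. For any unitary `[A C]` the
matrix `[[0, Aᵀ], [A, -C Cᵀ]]` is symmetric and unitary with lower-left block `A`; this gives `Φ`
from `A, C` and `Θ` from `B` with an empty `C`.
-/

theorem exists_orthonormalBasis_sumInl_smul_eq {𝕜 E : Type*} [RCLike 𝕜] [NormedAddCommGroup E]
    [InnerProductSpace 𝕜 E] [FiniteDimensional 𝕜 E] {m p : Type*} [Fintype m] [Fintype p]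
    (hcard : Module.finrank 𝕜 E = Fintype.card m + Fintype.card p) {w : m → E}
    (hw : Pairwise fun i j => inner 𝕜 (w i) (w j) = 0) :
    ∃ b : OrthonormalBasis (m ⊕ p) 𝕜 E, ∀ j, w j = (‖w j‖ : 𝕜) • b (Sum.inl j) := by
  let v : m ⊕ p → E := Sum.elim (fun j => (‖w j‖⁻¹ : 𝕜) • w j) 0
  let s : Set (m ⊕ p) := Sum.inl '' {j | w j ≠ 0}
  have hv : Orthonormal 𝕜 (s.domRestrict v) := by
    refine ⟨?_, ?_⟩
    · rintro ⟨_, j, hj, rfl⟩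
      exact norm_smul_inv_norm hj
    · intro a b hab
      obtain ⟨j, -, hj⟩ := a.2
      obtain ⟨k, -, hk⟩ := b.2
      have hjk : j ≠ k := by rintro rfl; exact hab (Subtype.ext (hj.symm.trans hk))
      simp [← hj, ← hk, v, inner_smul_left, inner_smul_right, hw hjk]
  obtain ⟨b, hb⟩ := hv.exists_orthonormalBasis_extension_of_card_eq (by simpa using hcard)
  refine ⟨b, fun j => ?_⟩
  by_cases hj : w j = 0
  · simp [hj]
  · rw [hb _ ⟨j, hj, rfl⟩]
    simp [v, smul_smul, hj]

namespace Matrix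

section Dilation

variable {R m n p : Type*} [CommRing R] [Fintype p]

def symmUnitaryDilation (A : Matrix n m R) (C : Matrix n p R) : Matrix (m ⊕ n) (m ⊕ n) R :=
  fromBlocks 0 Aᵀ A (-(C * Cᵀ))

theorem transpose_symmUnitaryDilation (A : Matrix n m R) (C : Matrix n p R) :
    (symmUnitaryDilation A C)ᵀ = symmUnitaryDilation A C := by
  simp [symmUnitaryDilation, fromBlocks_transpose, transpose_mul]

@[simp]
theorem toBlocks₂₁_symmUnitaryDilation (A : Matrix n m R) (C : Matrix n p R) :
    (symmUnitaryDilation A C).toBlocks₂₁ = A :=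
  toBlocks_fromBlocks₂₁ _ _ _ _

theorem conjTranspose_mul_symmUnitaryDilation [StarRing R] [Fintype m] [Fintype n]
    [DecidableEq m] [DecidableEq n] [DecidableEq p] {A : Matrix n m R} {C : Matrix n p R}
    (hAA : Aᴴ * A = 1) (hAC : Aᴴ * C = 0) (hCC : Cᴴ * C = 1) (hsum : A * Aᴴ + C * Cᴴ = 1) :
    (symmUnitaryDilation A C)ᴴ * symmUnitaryDilation A C = 1 := by
  have hCA : Cᴴ * A = 0 := by simpa using congrArg conjTranspose hAC
  rw [symmUnitaryDilation, fromBlocks_conjTranspose, fromBlocks_multiply, ← fromBlocks_one]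
  congr 1
  · simpa using hAA
  · simp [Matrix.mul_neg, ← Matrix.mul_assoc, hAC]
  · simp [Matrix.mul_assoc, hCA]
  · calc _ = Aᴴᵀ * Aᵀ + Cᴴᵀ * (Cᴴ * C) * Cᵀ := by
          simp only [conjTranspose_neg, neg_mul_neg, conjTranspose_mul,
            conjTranspose_transpose_eq_transpose_conjTranspose, Matrix.mul_assoc]
      _ = (A * Aᴴ + C * Cᴴ)ᵀ := by
          rw [hCC, Matrix.mul_one, transpose_add, transpose_mul, transpose_mul]
      _ = 1 := by rw [hsum, transpose_one]

end Dilation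

section FromCols

variable {R m n p : Type*} [CommRing R] [StarRing R]

theorem conjTranspose_fromCols_mul_fromCols_eq_one_iff [Fintype n] [DecidableEq m]
    [DecidableEq p] {A : Matrix n m R} {C : Matrix n p R} :
    (fromCols A C)ᴴ * fromCols A C = 1 ↔
      Aᴴ * A = 1 ∧ Aᴴ * C = 0 ∧ Cᴴ * A = 0 ∧ Cᴴ * C = 1 := by
  rw [conjTranspose_fromCols_eq_fromRows_conjTranspose, fromRows_mul_fromCols, ← fromBlocks_one,
    fromBlocks_inj]

theorem fromCols_mul_conjTranspose_fromCols [Fintype m] [Fintype p] (A : Matrix n m R)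
    (C : Matrix n p R) : fromCols A C * (fromCols A C)ᴴ = A * Aᴴ + C * Cᴴ := by
  rw [conjTranspose_fromCols_eq_fromRows_conjTranspose, fromCols_mul_fromRows]

end FromCols

theorem inner_toLp_col_toLp_col {m n : Type*} [Fintype n] (W : Matrix n m ℂ) (i j : m) :
    inner ℂ (WithLp.toLp 2 (W.col i)) (WithLp.toLp 2 (W.col j)) = (Wᴴ * W) i j := by
  simp [mul_apply, EuclideanSpace.inner_toLp_toLp, dotProduct, mul_comm]

theorem exists_singularValueDecomposition {m n : Type*} [Fintype m] [Fintype n] [DecidableEq m]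
    [DecidableEq n] (P : Matrix n m ℂ) (hmn : Fintype.card m ≤ Fintype.card n) :
    ∃ (A : Matrix n m ℂ) (C : Matrix n (Fin (Fintype.card n - Fintype.card m)) ℂ)
      (σ : m → ℝ) (B : Matrix m m ℂ),
      (fromCols A C)ᴴ * fromCols A C = 1 ∧ fromCols A C * (fromCols A C)ᴴ = 1 ∧
      (∀ j, 0 ≤ σ j) ∧ B ∈ unitaryGroup m ℂ ∧ P = A * diagonal (fun j => (σ j : ℂ)) * B := by
  have hH := isHermitian_conjTranspose_mul_self P
  set V : Matrix m m ℂ := ↑hH.eigenvectorUnitary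
  set W := P * V
  have hW : Wᴴ * W = diagonal (RCLike.ofReal ∘ hH.eigenvalues) := by
    rw [← hH.conjStarAlgAut_star_eigenvectorUnitary, Unitary.conjStarAlgAut_apply]
    simp [W, V, conjTranspose_mul, Matrix.mul_assoc, star_eq_conjTranspose]
  have horth : Pairwise fun i j =>
      inner ℂ (WithLp.toLp 2 (W.col i)) (WithLp.toLp 2 (W.col j)) = 0 := fun i j hij =>
    (inner_toLp_col_toLp_col W i j).trans (by rw [hW, diagonal_apply_ne _ hij])
  obtain ⟨b, hb⟩ := exists_orthonormalBasis_sumInl_smul_eq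
    (p := Fin (Fintype.card n - Fintype.card m))
    (by rw [finrank_euclideanSpace, Fintype.card_fin]; omega) horth
  set U := (EuclideanSpace.basisFun n ℂ).toBasis.toMatrix b
  refine ⟨U.toCols₁, U.toCols₂, fun j => ‖WithLp.toLp 2 (W.col j)‖, star V, ?_, ?_,
    fun j => norm_nonneg _, Unitary.star_mem hH.eigenvectorUnitary.2, ?_⟩
  · rw [fromCols_toCols]
    exact OrthonormalBasis.toMatrix_orthonormalBasis_conjTranspose_mul_self _ _
  · rw [fromCols_toCols]
    exact OrthonormalBasis.toMatrix_orthonormalBasis_self_mul_conjTranspose _ _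
  · have hPW : P = W * star V := by
      rw [Matrix.mul_assoc, mem_unitaryGroup_iff.mp hH.eigenvectorUnitary.2, Matrix.mul_one]
    rw [hPW]
    congr 1
    ext i j
    simpa [U, Module.Basis.toMatrix_apply, mul_comm] using congrArg (fun x => x i) (hb j)

end Matrix

/-- Any fully digital beamformer can be realized by a two-layer lossless
reciprocal MiLAC architecture. -/
theorem two_layer_milac_realizes_any_digital_beamformer
    (K L : ℕ) (hKL : K ≤ L) (Pd : Matrix (Fin L) (Fin K) ℂ) :
    ∃ (Θ : Matrix (Fin K ⊕ Fin K) (Fin K ⊕ Fin K) ℂ)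
      (Φ : Matrix (Fin K ⊕ Fin L) (Fin K ⊕ Fin L) ℂ)
      (D : Matrix (Fin K) (Fin K) ℝ),
      Θᴴ * Θ = 1 ∧ Θ = Θᵀ ∧
      Φᴴ * Φ = 1 ∧ Φ = Φᵀ ∧
      D.IsDiag ∧ (∀ k, 0 ≤ D k k) ∧
      Pd = Φ.toBlocks₂₁ * D.map (Complex.ofReal) * Θ.toBlocks₂₁ := by
  obtain ⟨A, C, σ, B, hU, hU', hσ, hB, rfl⟩ :=
    exists_singularValueDecomposition Pd (by simpa using hKL)
  obtain ⟨hAA, hAC, -, hCC⟩ := conjTranspose_fromCols_mul_fromCols_eq_one_iff.mp hU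
  rw [fromCols_mul_conjTranspose_fromCols] at hU'
  have hΘ : (symmUnitaryDilation B (0 : Matrix (Fin K) (Fin 0) ℂ))ᴴ *
      symmUnitaryDilation B (0 : Matrix (Fin K) (Fin 0) ℂ) = 1 :=
    conjTranspose_mul_symmUnitaryDilation (mem_unitaryGroup_iff'.mp hB) (Matrix.mul_zero _)
      (Subsingleton.elim _ _) (by simpa [star_eq_conjTranspose] using mem_unitaryGroup_iff.mp hB)
  refine ⟨symmUnitaryDilation B (0 : Matrix (Fin K) (Fin 0) ℂ), symmUnitaryDilation A C,
    diagonal σ, hΘ, (transpose_symmUnitaryDilation _ _).symm,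
    conjTranspose_mul_symmUnitaryDilation hAA hAC hCC hU', (transpose_symmUnitaryDilation _ _).symm,
    isDiag_diagonal σ, fun k => by simpa using hσ k, ?_⟩
  rw [toBlocks₂₁_symmUnitaryDilation, toBlocks₂₁_symmUnitaryDilation,
    diagonal_map Complex.ofReal_zero]
end

section
/- Let Θ ∈ ℂ^{N×N} be unitary and symmetric (Θ = Θᵀ) with −1 not an eigenvalue of Θ. Then B := (1/(i·Z₀))·(I + Θ)⁻¹(I − Θ) is a real symmetric matrix, i.e., every unitary symmetric matrix avoiding eigenvalue −1 arises as the scattering matrix of a lossless reciprocal network. -/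
/-!
Transposition and conjugate transposition commute with the Cayley transform
`A ↦ (1 + A)⁻¹ (1 - A)`, which changes sign under `A ↦ A⁻¹`. For `Θ` symmetric and unitary
(`Θᴴ = Θ⁻¹`) the transform is therefore symmetric and skew-Hermitian, so its entries are purely
imaginary, and multiplying by the purely imaginary scalar `1 / (i Z₀)` makes them real.
-/

open Matrix

theorem Commute.matrix_nonsing_inv_left {n R : Type*} [Fintype n] [DecidableEq n] [CommRing R]
    {A B : Matrix n n R} (h : Commute A B) : Commute A⁻¹ B := by
  by_cases hA : IsUnit A.det
  · let := A.invertibleOfIsUnitDet hA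
    rw [← invOf_eq_nonsing_inv]
    exact h.invOf_left
  · rw [nonsing_inv_apply_not_isUnit A hA]
    exact Commute.zero_left B

namespace Matrix

theorem IsSymm.re_apply_eq_zero_of_conjTranspose_eq_neg {n : Type*} {M : Matrix n n ℂ}
    (hsymm : M.IsSymm) (hskew : Mᴴ = -M) (i j : n) : (M i j).re = 0 := by
  have hconj : star (M i j) = -M i j := by
    simpa [hsymm.apply i j] using congr_fun₂ hskew j i
  have hre := congrArg Complex.re hconj
  simp only [Complex.star_def, Complex.conj_re, Complex.neg_re] at hre
  linarith

variable {n R : Type*} [Fintype n] [DecidableEq n] [CommRing R]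

/-- `(1 + A)⁻¹` is `0` when `1 + A` is singular, so none of the identities below needs
`1 + A` to be invertible. -/
noncomputable def cayley (A : Matrix n n R) : Matrix n n R := (1 + A)⁻¹ * (1 - A)

theorem cayley_eq_mul_nonsing_inv (A : Matrix n n R) : cayley A = (1 - A) * (1 + A)⁻¹ := by
  have hcomm : Commute (1 + A) (1 - A) :=
    (Commute.one_right _).sub_right ((Commute.one_left A).add_left (Commute.refl A))
  exact hcomm.matrix_nonsing_inv_left.eq

theorem transpose_cayley (A : Matrix n n R) : (cayley A)ᵀ = cayley Aᵀ := by
  rw [cayley, transpose_mul, transpose_nonsing_inv, transpose_add, transpose_sub, transpose_one,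
    ← cayley_eq_mul_nonsing_inv]

theorem IsSymm.cayley {A : Matrix n n R} (hA : A.IsSymm) : (cayley A).IsSymm := by
  rw [IsSymm, transpose_cayley, hA.eq]

theorem conjTranspose_cayley [StarRing R] (A : Matrix n n R) : (cayley A)ᴴ = cayley Aᴴ := by
  rw [cayley, conjTranspose_mul, conjTranspose_nonsing_inv, conjTranspose_add,
    conjTranspose_sub, conjTranspose_one, ← cayley_eq_mul_nonsing_inv]

theorem cayley_nonsing_inv {A : Matrix n n R} (hA : IsUnit A.det) : cayley A⁻¹ = -cayley A := by
  have hplus : 1 + A⁻¹ = A⁻¹ * (1 + A) := by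
    rw [mul_add, nonsing_inv_mul A hA, mul_one, add_comm]
  have hminus : 1 - A⁻¹ = -(A⁻¹ * (1 - A)) := by
    rw [mul_sub, nonsing_inv_mul A hA, mul_one, neg_sub]
  rw [cayley, cayley, hplus, hminus, mul_inv_rev, nonsing_inv_nonsing_inv A hA, mul_neg,
    mul_assoc, ← mul_assoc A, mul_nonsing_inv A hA, one_mul]

theorem conjTranspose_cayley_of_conjTranspose_mul_self_eq_one [StarRing R] {U : Matrix n n R}
    (hU : Uᴴ * U = 1) : (cayley U)ᴴ = -cayley U := by
  rw [conjTranspose_cayley, ← inv_eq_left_inv hU,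
    cayley_nonsing_inv (isUnit_det_of_left_inverse hU)]

end Matrix

theorem inverse_cayley_real_symmetric_general
    (N : ℕ) (Θ : Matrix (Fin N) (Fin N) ℂ)
    (hunit : Θᴴ * Θ = 1) (hsym : Θ = Θᵀ)
    (Z0 : ℝ) :
    (∀ i j, (((1 / (Complex.I * (Z0 : ℂ))) • ((1 + Θ)⁻¹ * (1 - Θ))) i j).im = 0) ∧
      ((1 / (Complex.I * (Z0 : ℂ))) • ((1 + Θ)⁻¹ * (1 - Θ))) =
        ((1 / (Complex.I * (Z0 : ℂ))) • ((1 + Θ)⁻¹ * (1 - Θ)))ᵀ := by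
  have hsymm : (cayley Θ).IsSymm := IsSymm.cayley hsym.symm
  have hskew : (cayley Θ)ᴴ = -cayley Θ :=
    conjTranspose_cayley_of_conjTranspose_mul_self_eq_one hunit
  have hscalar : (1 / (Complex.I * (Z0 : ℂ))).re = 0 := by simp
  refine ⟨fun i j => ?_, ?_⟩
  · have hentry : (((1 + Θ)⁻¹ * (1 - Θ)) i j).re = 0 :=
      hsymm.re_apply_eq_zero_of_conjTranspose_eq_neg hskew i j
    rw [Matrix.smul_apply, smul_eq_mul, Complex.mul_im, hscalar, hentry, zero_mul, mul_zero,
      add_zero]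
  · rw [transpose_smul]
    exact congrArg _ hsymm.eq.symm

theorem inverse_cayley_real_symmetric
    (N : ℕ) (Θ : Matrix (Fin N) (Fin N) ℂ)
    (hunit : Θᴴ * Θ = 1) (hsym : Θ = Θᵀ)
    (hne : IsUnit (1 + Θ).det)
    (Z0 : ℝ) (hZ0 : 0 < Z0) :
    (∀ i j, (((1 / (Complex.I * (Z0 : ℂ))) • ((1 + Θ)⁻¹ * (1 - Θ))) i j).im = 0) ∧
      ((1 / (Complex.I * (Z0 : ℂ))) • ((1 + Θ)⁻¹ * (1 - Θ))) =
        ((1 / (Complex.I * (Z0 : ℂ))) • ((1 + Θ)⁻¹ * (1 - Θ)))ᵀ :=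
  inverse_cayley_real_symmetric_general N Θ hunit hsym Z0
end

section
/- For γ > 0, the identity log(1+γ) = max over α ≥ 0 of [log(1+α) − α + (1+α)γ/(1+γ)] holds, with the maximum attained at α = γ. -/
/-! With `a = 1 + α` and `b = 1 + γ` the objective equals `log a + 1 - a / b`, so the bound is
`log (a / b) ≤ a / b - 1`, with equality exactly at `a = b`. -/

open Real

theorem Real.log_add_one_sub_div_le_log {a b : ℝ} (ha : 0 < a) (hb : 0 < b) :
    log a + 1 - a / b ≤ log b := by
  have h := log_le_sub_one_of_pos (div_pos ha hb)
  rw [log_div ha.ne' hb.ne'] at h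
  linarith

theorem Real.log_one_add_sub_add_mul_div_le {α γ : ℝ} (hα : -1 < α) (hγ : -1 < γ) :
    log (1 + α) - α + (1 + α) * γ / (1 + γ) ≤ log (1 + γ) := by
  have hb : 0 < 1 + γ := by linarith
  have hobj : (1 + α) * γ / (1 + γ) = (1 + α) - (1 + α) / (1 + γ) := by
    field_simp
    ring
  rw [hobj]
  linarith [log_add_one_sub_div_le_log (by linarith : 0 < 1 + α) hb]

theorem fp_lagrangian_dual_transform (γ : ℝ) (hγ : 0 < γ) :
    (∀ α : ℝ, 0 ≤ α →
        Real.log (1 + α) - α + (1 + α) * γ / (1 + γ) ≤ Real.log (1 + γ)) ∧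
      Real.log (1 + γ) - γ + (1 + γ) * γ / (1 + γ) = Real.log (1 + γ) := by
  have hγ' : -1 < γ := by linarith
  refine ⟨fun α hα => log_one_add_sub_add_mul_div_le (by linarith) hγ', ?_⟩
  rw [mul_div_cancel_left₀ γ (by linarith : (1 + γ) ≠ 0)]
  ring
end
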